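/- arXiv:0904.2782 — 6 statements merged into one kernel-verified Lean document; each statement's English description precedes it below -/
import Mathlib

section
/- (Algorithmic foundation of probability theory.) ν-almost every x : ℕ → Bool is Martin-Löf–Solovay–Chaitin random. -/
open MeasureTheory Filter

/-- `u` is a proper prefix of `v`. -/
def ProperPrefix (u v : List Bool) : Prop :=
  ∃ w : List Bool, w ≠ [] ∧ v = u ++ w

/-- A set of strings is prefix-free if no element is a proper prefix of another element. -/
def PrefixFreeSet (S : Set (List Bool)) : Prop :=
  ∀ u ∈ S, ∀ v ∈ S, ¬ ProperPrefix u v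

/-- A Chaitin computer: a partial recursive function on binary strings whose
halting set (domain) is prefix-free. -/
structure ChaitinComputer where
  f : List Bool →. List Bool
  partrec : Partrec f
  prefixFree : PrefixFreeSet {w : List Bool | (f w).Dom}

/-- A Chaitin computer `U` is universal if for every Chaitin computer `C` there is a
constant `c` such that every `w` in the domain of `C` is simulated: there is `y` with
`U y = C w` and `y.length ≤ w.length + c`. -/
def ChaitinComputer.Universal (U : ChaitinComputer) : Prop :=
  ∀ C : ChaitinComputer, ∃ c : ℕ, ∀ w : List Bool, (C.f w).Dom →
    ∃ y : List Bool, U.f y = C.f w ∧ y.length ≤ w.length + c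

/-- The algorithmic information of a string `w` with respect to a universal Chaitin
computer `U`: the least length of a program `y` with `U y = w`, and `∞` if there is none. -/
noncomputable def info (U : ChaitinComputer) (w : List Bool) : ℕ∞ :=
  ⨅ (y : List Bool) (_ : U.f y = Part.some w), (y.length : ℕ∞)

/-- The prefix of length `n` of a sequence `x : ℕ → Bool`, as a binary string. -/
def prefixOf (x : ℕ → Bool) (n : ℕ) : List Bool :=
  (List.range n).map x

/-- A sequence is Martin-Löf–Solovay–Chaitin random if for every universal Chaitin
computer `U` there is a constant `c > 0` with `I_U(x↾n) ≥ n − c` for all `n ≥ 1`. -/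
def MLSCRandom (x : ℕ → Bool) : Prop :=
  ∀ U : ChaitinComputer, U.Universal →
    ∃ c : ℕ, 0 < c ∧ ∀ n : ℕ, 1 ≤ n →
      (n : ℕ∞) ≤ info U (prefixOf x n) + (c : ℕ∞)

/-! A program `y` of a Chaitin computer that prints a string `w` more than `c` bits longer than
itself accounts for the fair-coin mass `2^{-|w|} ≤ 2^{-c} ⋅ 2^{-|y|}`, and by Kraft's inequality for
the prefix-free domain the masses `2^{-|y|}` sum to at most `1`. So the sequences having a prefix
compressible by more than `c` bits form a set of measure at most `2^{-c}`, and almost every sequence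
has some `c` for which no prefix is compressible by more than `c` bits. Applied to one universal
computer `U₀`, this transfers to every universal `U`, since `I_{U₀} ≤ I_U + d` for a constant `d`. -/

open Set
open scoped ENNReal

def prefixCylinder (w : List Bool) : Set (ℕ → Bool) := {x | prefixOf x w.length = w}

lemma prefixOf_length (x : ℕ → Bool) (n : ℕ) : (prefixOf x n).length = n := by
  simp [prefixOf]

lemma prefixOf_isPrefix_prefixOf (x : ℕ → Bool) {m n : ℕ} (h : m ≤ n) :
    prefixOf x m <+: prefixOf x n := by
  simpa [prefixOf, ← List.map_take, List.take_range, h] using List.take_prefix m (prefixOf x n)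

lemma mem_prefixCylinder_prefixOf (x : ℕ → Bool) (n : ℕ) : x ∈ prefixCylinder (prefixOf x n) := by
  simp [prefixCylinder, prefixOf_length]

lemma prefixCylinder_eq_setOf_forall (w : List Bool) :
    prefixCylinder w = {x | ∀ i : Fin w.length, x i = w.get i} := by
  ext x
  simp [prefixCylinder, List.ext_get_iff, prefixOf, Fin.forall_iff]

lemma measurableSet_prefixCylinder (w : List Bool) : MeasurableSet (prefixCylinder w) := by
  rw [prefixCylinder_eq_setOf_forall, ofPred_forall]
  exact .iInter fun i => measurableSet_eq_fun (measurable_pi_apply _) measurable_const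

lemma isPrefix_or_isPrefix_of_mem_prefixCylinder {u v : List Bool} {x : ℕ → Bool}
    (hu : x ∈ prefixCylinder u) (hv : x ∈ prefixCylinder v) : u <+: v ∨ v <+: u := by
  rw [prefixCylinder, mem_ofPred_eq] at hu hv
  rcases le_total u.length v.length with h | h
  · exact .inl (hu ▸ hv ▸ prefixOf_isPrefix_prefixOf x h)
  · exact .inr (hu ▸ hv ▸ prefixOf_isPrefix_prefixOf x h)

lemma properPrefix_of_isPrefix {u v : List Bool} (h : u <+: v) (hne : u ≠ v) :
    ProperPrefix u v := by
  obtain ⟨w, rfl⟩ := h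
  exact ⟨w, fun hw => hne (by simp [hw]), rfl⟩

lemma PrefixFreeSet.pairwiseDisjoint_prefixCylinder {S : Set (List Bool)} (hS : PrefixFreeSet S) :
    S.PairwiseDisjoint prefixCylinder := by
  intro u hu v hv hne
  refine disjoint_left.2 fun x hxu hxv => ?_
  rcases isPrefix_or_isPrefix_of_mem_prefixCylinder hxu hxv with h | h
  · exact hS u hu v hv (properPrefix_of_isPrefix h hne)
  · exact hS v hv u hu (properPrefix_of_isPrefix h hne.symm)

lemma PrefixFreeSet.tsum_measure_prefixCylinder_le {S : Set (List Bool)} (hS : PrefixFreeSet S)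
    (ν : Measure (ℕ → Bool)) : ∑' w : S, ν (prefixCylinder w) ≤ ν univ := by
  rw [← measure_biUnion S.to_countable hS.pairwiseDisjoint_prefixCylinder
    fun w _ => measurableSet_prefixCylinder w]
  exact measure_mono (subset_univ _)

lemma le_info_add_iff {U : ChaitinComputer} {w : List Bool} {a c : ℕ∞} :
    a ≤ info U w + c ↔ ∀ y, U.f y = Part.some w → a ≤ y.length + c := by
  rw [info, ENat.iInf₂_add, le_iInf₂_iff]

lemma ChaitinComputer.Universal.exists_info_le_info_add {U₀ : ChaitinComputer} (hU₀ : U₀.Universal)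
    (U : ChaitinComputer) : ∃ d : ℕ, ∀ w, info U₀ w ≤ info U w + d := by
  obtain ⟨d, hd⟩ := hU₀ U
  refine ⟨d, fun w => le_info_add_iff.2 fun y hy => ?_⟩
  obtain ⟨z, hz, hzy⟩ := hd y (hy ▸ trivial)
  calc info U₀ w ≤ z.length := iInf₂_le z (hz.trans hy)
    _ ≤ y.length + d := mod_cast hzy

def Incompressible (U : ChaitinComputer) (c : ℕ) (x : ℕ → Bool) : Prop :=
  ∀ n : ℕ, (n : ℕ∞) ≤ info U (prefixOf x n) + c

lemma Incompressible.mlscRandom {U₀ : ChaitinComputer} {c : ℕ} {x : ℕ → Bool}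
    (hx : Incompressible U₀ c x) (hU₀ : U₀.Universal) : MLSCRandom x := by
  intro U _
  obtain ⟨d, hd⟩ := hU₀.exists_info_le_info_add U
  refine ⟨c + d + 1, by omega, fun n _ => ?_⟩
  calc (n : ℕ∞) ≤ info U₀ (prefixOf x n) + c := hx n
    _ ≤ info U (prefixOf x n) + d + c := by gcongr; exact hd _
    _ ≤ info U (prefixOf x n) + (c + d + 1 : ℕ) := by
      rw [add_assoc]; gcongr; exact_mod_cast (by omega : d + c ≤ c + d + 1)

def compressions (U : ChaitinComputer) (c : ℕ) : Set (List Bool × List Bool) :=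
  {p | U.f p.1 = Part.some p.2 ∧ p.1.length + c < p.2.length}

lemma setOf_not_incompressible_subset (U : ChaitinComputer) (c : ℕ) :
    {x | ¬ Incompressible U c x} ⊆ ⋃ p ∈ compressions U c, prefixCylinder p.2 := by
  intro x hx
  simp only [Incompressible, le_info_add_iff, mem_ofPred_eq, not_forall] at hx
  obtain ⟨n, y, hy, hlt⟩ := hx
  refine mem_biUnion (x := (y, prefixOf x n)) ⟨hy, ?_⟩ (mem_prefixCylinder_prefixOf x n)
  rw [prefixOf_length]
  exact_mod_cast not_le.1 hlt

section FairCoin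

variable {ν : Measure (ℕ → Bool)}

lemma PrefixFreeSet.tsum_half_pow_length_le_one (hν : ∀ w, ν (prefixCylinder w) = (1 / 2) ^ w.length)
    {S : Set (List Bool)} (hS : PrefixFreeSet S) :
    ∑' w : S, (1 / 2 : ℝ≥0∞) ^ (w : List Bool).length ≤ 1 := by
  have huniv : ν univ = 1 := by
    simpa [prefixCylinder, prefixOf] using hν []
  simpa only [← hν, huniv] using hS.tsum_measure_prefixCylinder_le ν

lemma measure_setOf_not_incompressible_le (hν : ∀ w, ν (prefixCylinder w) = (1 / 2) ^ w.length)
    (U : ChaitinComputer) (c : ℕ) :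
    ν {x | ¬ Incompressible U c x} ≤ (1 / 2) ^ c := by
  have hkraft : ∑' p : compressions U c, (1 / 2 : ℝ≥0∞) ^ p.1.1.length ≤ 1 := by
    have hmaps : MapsTo Prod.fst (compressions U c) {y | (U.f y).Dom} := fun p hp =>
      show (U.f p.1).Dom by rw [hp.1]; trivial
    have hinj : InjOn Prod.fst (compressions U c) := fun p hp q hq h =>
      Prod.ext h (Part.some_inj.1 (hp.1.symm.trans (h ▸ hq.1)))
    exact (ENNReal.tsum_comp_le_tsum_of_injective (hmaps.restrict_inj.2 hinj) _).trans
      (U.prefixFree.tsum_half_pow_length_le_one hν)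
  calc ν {x | ¬ Incompressible U c x}
      ≤ ∑' p : compressions U c, ν (prefixCylinder p.1.2) :=
        (measure_mono (setOf_not_incompressible_subset U c)).trans
          (measure_biUnion_le ν (to_countable _) _)
    _ ≤ ∑' p : compressions U c, (1 / 2) ^ c * (1 / 2) ^ p.1.1.length := by
        refine ENNReal.tsum_le_tsum fun p => ?_
        rw [hν, ← pow_add]
        exact pow_le_pow_of_le_one (by norm_num) (by norm_num) (by have := p.2.2; omega)
    _ ≤ (1 / 2) ^ c := by
        rw [ENNReal.tsum_mul_left]
        exact mul_le_of_le_one_right' hkraft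

lemma ae_exists_incompressible (hν : ∀ w, ν (prefixCylinder w) = (1 / 2) ^ w.length)
    (U : ChaitinComputer) : ∀ᵐ x ∂ν, ∃ c, Incompressible U c x := by
  rw [ae_iff]
  simp only [not_exists, ofPred_forall]
  refine nonpos_iff_eq_zero.1 (ge_of_tendsto' (ENNReal.tendsto_pow_atTop_nhds_zero_of_lt_one
    (by norm_num : (1 / 2 : ℝ≥0∞) < 1)) fun c => ?_)
  exact (measure_mono (iInter_subset _ c)).trans (measure_setOf_not_incompressible_le hν U c)

end FairCoin

theorem ae_mlsc_random_general
    (ν : Measure (ℕ → Bool))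
    (hν : ∀ (n : ℕ) (b : Fin n → Bool),
      ν {x : ℕ → Bool | ∀ i : Fin n, x i = b i} = (1 / 2 : ENNReal) ^ n) :
    ∀ᵐ x ∂ν, MLSCRandom x := by
  have hcyl : ∀ w, ν (prefixCylinder w) = (1 / 2) ^ w.length := fun w => by
    rw [prefixCylinder_eq_setOf_forall]
    exact hν _ _
  by_cases h : ∃ U : ChaitinComputer, U.Universal
  · obtain ⟨U₀, hU₀⟩ := h
    filter_upwards [ae_exists_incompressible hcyl U₀] with x ⟨c, hc⟩
    exact hc.mlscRandom hU₀
  · exact ae_of_all ν fun x U hU => (h ⟨U, hU⟩).elim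

/-- **Algorithmic foundation of probability theory.**
If `ν` is the product probability measure on `ℕ → Bool` under which the coordinates are
independent fair coin tosses (characterized by its cylinder probabilities), then
`ν`-almost every sequence is Martin-Löf–Solovay–Chaitin random. -/
theorem ae_mlsc_random
    (ν : Measure (ℕ → Bool)) [IsProbabilityMeasure ν]
    (hν : ∀ (n : ℕ) (b : Fin n → Bool),
      ν {x : ℕ → Bool | ∀ i : Fin n, x i = b i} = (1 / 2 : ENNReal) ^ n) :
    ∀ᵐ x ∂ν, MLSCRandom x :=
  ae_mlsc_random_general ν hν
end

section
/- (Nash equilibria of strictly competitive games, part 1.) In a two-player zero-sum strategic game with nonempty action sets X, Y and bounded payoff u : X × Y → ℝ, if (x*, y*) is a Nash equilibrium, then x* is a maxminimizer for Alice and y* is a maxminimizer for Bob. -/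
/-- **Nash equilibria of strictly competitive (two-player zero-sum) games, part 1.**
In a two-player zero-sum game with nonempty action sets `X`, `Y` and bounded payoff
`u : X → Y → ℝ` (Alice's utility is `u`, Bob's is `−u`), if `(xs, ys)` is a Nash
equilibrium, then `xs` is a maxminimizer for Alice (`⨅ y, u xs y` is maximal) and `ys`
is a maxminimizer for Bob (`⨆ x, u x ys` is minimal). -/
theorem nash_gives_maxminimizers
    {X Y : Type*} [Nonempty X] [Nonempty Y]
    (u : X → Y → ℝ) (M : ℝ) (hM : ∀ x y, |u x y| ≤ M)
    (xs : X) (ys : Y)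
    (hNash₁ : ∀ x : X, u x ys ≤ u xs ys)
    (hNash₂ : ∀ y : Y, u xs ys ≤ u xs y) :
    (∀ x : X, (⨅ y : Y, u x y) ≤ ⨅ y : Y, u xs y) ∧
    (∀ y : Y, (⨆ x : X, u x ys) ≤ ⨆ x : X, u x y) := by
  constructor
  · intro x
    have hbdd : BddBelow (Set.range fun y => u x y) :=
      ⟨-M, by rintro _ ⟨y, rfl⟩; exact neg_le_of_abs_le (hM x y)⟩
    calc (⨅ y : Y, u x y) ≤ u x ys := ciInf_le hbdd ys
      _ ≤ u xs ys := hNash₁ x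
      _ ≤ ⨅ y : Y, u xs y := le_ciInf hNash₂
  · intro y
    have hbdd : BddAbove (Set.range fun x => u x y) :=
      ⟨M, by rintro _ ⟨x, rfl⟩; exact le_of_abs_le (hM x y)⟩
    calc (⨆ x : X, u x ys) ≤ u xs ys := ciSup_le hNash₁
      _ ≤ u xs y := hNash₂ y
      _ ≤ ⨆ x : X, u x y := le_ciSup hbdd xs
end

section
/- (Nash equilibria of strictly competitive games, part 2.) In a two-player zero-sum strategic game with nonempty action sets X, Y and bounded payoff u : X × Y → ℝ, if (x*, y*) is a Nash equilibrium, then ⨆_{x ∈ X} ⨅_{y ∈ Y} u(x, y) = ⨅_{y ∈ Y} ⨆_{x ∈ X} u(x, y) = u(x*, y*). -/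
/-- **Nash equilibria of strictly competitive (two-player zero-sum) games, part 2.**
In a two-player zero-sum game with nonempty action sets `X`, `Y` and bounded payoff
`u : X → Y → ℝ`, if `(xs, ys)` is a Nash equilibrium, then
`⨆ x, ⨅ y, u x y = ⨅ y, ⨆ x, u x y = u xs ys`. -/
theorem nash_gives_minimax_value
    {X Y : Type*} [Nonempty X] [Nonempty Y]
    (u : X → Y → ℝ) (M : ℝ) (hM : ∀ x y, |u x y| ≤ M)
    (xs : X) (ys : Y)
    (hNash₁ : ∀ x : X, u x ys ≤ u xs ys)
    (hNash₂ : ∀ y : Y, u xs ys ≤ u xs y) :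
    (⨆ x : X, ⨅ y : Y, u x y) = u xs ys ∧ (⨅ y : Y, ⨆ x : X, u x y) = u xs ys := by
  have hlb : ∀ x y, -M ≤ u x y := fun x y => neg_le_of_abs_le (hM x y)
  have hub : ∀ x y, u x y ≤ M := fun x y => le_of_abs_le (hM x y)
  have hbddInf : ∀ x, BddBelow (Set.range (u x)) := fun x => ⟨-M, fun r ⟨y, hy⟩ => hy ▸ hlb x y⟩
  have hbddSup : ∀ y, BddAbove (Set.range (fun x => u x y)) :=
    fun y => ⟨M, fun r ⟨x, hx⟩ => hx ▸ hub x y⟩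
  constructor
  · apply le_antisymm
    · apply ciSup_le
      intro x
      exact le_trans (ciInf_le (hbddInf x) ys) (hNash₁ x)
    · calc u xs ys ≤ ⨅ y, u xs y := le_ciInf hNash₂
        _ ≤ ⨆ x, ⨅ y, u x y := by
            apply le_ciSup (f := fun x => ⨅ y, u x y)
            exact ⟨M, fun r ⟨x, hx⟩ => hx ▸ le_trans (ciInf_le (hbddInf x) ys) (hub x ys)⟩
  · apply le_antisymm
    · have hb : BddBelow (Set.range (fun y => ⨆ x, u x y)) := by
        refine ⟨-M, fun r ⟨y, hy⟩ => ?_⟩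
        subst hy
        exact le_trans (hlb xs y) (le_ciSup (hbddSup y) xs)
      calc (⨅ y, ⨆ x, u x y) ≤ ⨆ x, u x ys := ciInf_le hb ys
        _ ≤ u xs ys := ciSup_le hNash₁
    · apply le_ciInf
      intro y
      exact le_trans (hNash₂ y) (le_ciSup (hbddSup y) xs)
end

section
/- (Nash equilibria of strictly competitive games, part 3.) In a two-player zero-sum strategic game with nonempty action sets X, Y and bounded payoff u : X × Y → ℝ, if ⨆_{x ∈ X} ⨅_{y ∈ Y} u(x, y) = ⨅_{y ∈ Y} ⨆_{x ∈ X} u(x, y), x* is a maxminimizer for Alice, and y* is a maxminimizer for Bob, then (x*, y*) is a Nash equilibrium. -/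
/-- **Nash equilibria of strictly competitive (two-player zero-sum) games, part 3.**
In a two-player zero-sum game with nonempty action sets `X`, `Y` and bounded payoff
`u : X → Y → ℝ`, if `⨆ x, ⨅ y, u x y = ⨅ y, ⨆ x, u x y`, `xs` is a maxminimizer for
Alice and `ys` is a maxminimizer for Bob, then `(xs, ys)` is a Nash equilibrium. -/
theorem maxminimizers_give_nash
    {X Y : Type*} [Nonempty X] [Nonempty Y]
    (u : X → Y → ℝ) (M : ℝ) (hM : ∀ x y, |u x y| ≤ M)
    (xs : X) (ys : Y)
    (hminimax : (⨆ x : X, ⨅ y : Y, u x y) = ⨅ y : Y, ⨆ x : X, u x y)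
    (hxs : ∀ x : X, (⨅ y : Y, u x y) ≤ ⨅ y : Y, u xs y)
    (hys : ∀ y : Y, (⨆ x : X, u x ys) ≤ ⨆ x : X, u x y) :
    (∀ x : X, u x ys ≤ u xs ys) ∧ (∀ y : Y, u xs ys ≤ u xs y) := by
  have hbddb : ∀ x : X, BddBelow (Set.range (u x)) := fun x =>
    ⟨-M, fun r ⟨y, hy⟩ => hy ▸ (neg_le_of_abs_le (hM x y))⟩
  have hbdda : ∀ y : Y, BddAbove (Set.range (fun x => u x y)) := fun y =>
    ⟨M, fun r ⟨x, hx⟩ => hx ▸ (le_of_abs_le (hM x y))⟩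
  have hbddi : BddAbove (Set.range (fun x : X => ⨅ y : Y, u x y)) :=
    ⟨M, fun r ⟨x, hx⟩ => hx ▸ (ciInf_le (hbddb x) (Classical.arbitrary Y)).trans
      (le_of_abs_le (hM x _))⟩
  have hbdds : BddBelow (Set.range (fun y : Y => ⨆ x : X, u x y)) :=
    ⟨-M, fun r ⟨y, hy⟩ => hy ▸ le_trans (neg_le_of_abs_le (hM (Classical.arbitrary X) y))
      (le_ciSup (hbdda y) _)⟩
  have hA : (⨅ y : Y, u xs y) = ⨆ x : X, ⨅ y : Y, u x y :=
    le_antisymm (le_ciSup hbddi xs) (ciSup_le hxs)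
  have hB : (⨆ x : X, u x ys) = ⨅ y : Y, ⨆ x : X, u x y :=
    le_antisymm (le_ciInf hys) (ciInf_le hbdds ys)
  have h1 : (⨅ y : Y, u xs y) ≤ u xs ys := ciInf_le (hbddb xs) ys
  have h2 : u xs ys ≤ ⨆ x : X, u x ys := le_ciSup (hbdda ys) xs
  have hv : u xs ys = ⨅ y : Y, u xs y := by
    have : (⨆ x : X, u x ys) ≤ ⨅ y : Y, u xs y := by rw [hA, hB, hminimax]
    linarith
  constructor
  · intro x
    have := le_ciSup (hbdda ys) x
    have heq : (⨅ y : Y, u xs y) = ⨆ x : X, u x ys := by rw [hA, hB, hminimax]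
    have h3 : (⨆ x : X, u x ys) ≤ u xs ys := by linarith
    linarith
  · intro y
    have := ciInf_le (hbddb xs) y
    linarith [hv ▸ this]
end

section
/- (Fundamental theorem about Von Mises–Church randomness, betting form.) A sequence x : ℕ → Bool is Von Mises–Church random if and only if for every partial recursive strategy f : List Bool →. Bool that bets infinitely often along x, Bob's long-run average gain per bet vanishes, i.e. P(n)/B(n) → 0 as n → ∞ (equivalently, Alice's average gain per bet, the negative of Bob's, also tends to 0): no effectively computable betting strategy wins against x and x does not win against any such strategy. -/
open Filter

open scoped Classical

/-- Number of `true`'s among the first `n` digits of `x`. -/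
def trueCount (x : ℕ → Bool) (n : ℕ) : ℕ :=
  ((Finset.range n).filter (fun i => x i = true)).card

/-- The index `n ≥ 1` is selected by the selection rule `f` along `x`:
`f(x₁, …, x_{n−1})` is defined and equals `true`.  (Position `n` carries the bit
`x (n-1)` since `x` is indexed from `0`.) -/
def SelectedAt (f : List Bool →. Bool) (x : ℕ → Bool) (n : ℕ) : Prop :=
  1 ≤ n ∧ f (prefixOf x (n - 1)) = Part.some true

/-- The subsequence of `x` along the selected indices, in increasing order. -/
noncomputable def selectedSeq (f : List Bool →. Bool) (x : ℕ → Bool) (k : ℕ) : Bool :=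
  x (Nat.nth (SelectedAt f x) k - 1)

/-- A sequence `x` is Von Mises–Church random if the frequency of `true`'s in its prefixes
tends to `1/2`, and for every partial recursive selection rule `f` selecting infinitely
many indices along `x`, the frequency of `true`'s along the selected subsequence also
tends to `1/2`. -/
def VMCRandom (x : ℕ → Bool) : Prop :=
  Tendsto (fun n : ℕ => (trueCount x n : ℝ) / n) atTop (nhds (1 / 2)) ∧
  ∀ f : List Bool →. Bool, Partrec f → {n : ℕ | SelectedAt f x n}.Infinite →
    Tendsto
      (fun m : ℕ =>
        ((((Finset.range m).filter (fun k => selectedSeq f x k = true)).card : ℝ) / m))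
      atTop (nhds (1 / 2))

/-- Bob's payoff at round `n ≥ 1` when betting with strategy `f` against `x`:
`0` if `f(x₁, …, x_{n−1})` is undefined (no bet), `+1` if the bet equals `xₙ`,
`−1` otherwise. -/
noncomputable def payoff (f : List Bool →. Bool) (x : ℕ → Bool) (n : ℕ) : ℤ :=
  if h : (f (prefixOf x (n - 1))).Dom then
    (if (f (prefixOf x (n - 1))).get h = x (n - 1) then 1 else -1)
  else 0

/-- `B(n)`: the number of rounds `≤ n` at which Bob bets. -/
noncomputable def betCount (f : List Bool →. Bool) (x : ℕ → Bool) (n : ℕ) : ℕ :=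
  ((Finset.Icc 1 n).filter (fun k => (f (prefixOf x (k - 1))).Dom)).card

/-- `P(n)`: the sum of Bob's payoffs over the rounds `≤ n`. -/
noncomputable def payoffSum (f : List Bool →. Bool) (x : ℕ → Bool) (n : ℕ) : ℤ :=
  ∑ k ∈ Finset.Icc 1 n, payoff f x k

/-- `f` bets infinitely often along `x`: `B(n) → ∞`. -/
noncomputable def BetsInfinitelyOften (f : List Bool →. Bool) (x : ℕ → Bool) : Prop :=
  Tendsto (fun n : ℕ => betCount f x n) atTop atTop

/-!
A selection rule `g` becomes the strategy `trueBets g`, which bets `true` exactly at the rounds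
selected by `g`. After `n` rounds it has bet `B` times and won `T` of them, so its payoff is
`2T - B`: the subsequence selected by `g` has frequency of `true`s tending to `1/2` iff the average
gain of `trueBets g` per bet tends to `0`.

Conversely, a strategy `f` splits into the rules "`f` bets `true`" and "`f` bets `false`"
(`negStrategy f` selects the latter), and `P(n)` is the difference of the payoffs of their
`trueBets` strategies, each of which has made at most `B(n)` bets. Each payoff is `o(B(n))`:
if the rule selects infinitely often, by VMC randomness; otherwise it is bounded. The frequency
condition on `x` itself is the case of the rule selecting every index.
-/

open Finset Topology

namespace Nat

variable {p q : ℕ → Prop} [DecidablePred p] [DecidablePred q]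

theorem card_filter_range_count_nth (n : ℕ) :
    #{k ∈ range (count p n) | q (nth p k)} = count (fun k => p k ∧ q k) n := by
  induction n with
  | zero => simp
  | succ n ih =>
    by_cases hpn : p n
    · rw [count_succ, if_pos hpn, range_add_one, filter_insert, nth_count hpn, count_succ]
      by_cases hqn : q n
      · rw [if_pos hqn, if_pos ⟨hpn, hqn⟩, card_insert_of_notMem (by simp), ih]
      · rw [if_neg hqn, if_neg (fun h => hqn h.2), ih, add_zero]
    · rw [count_succ, count_succ, if_neg hpn, if_neg (fun h => hpn h.1), add_zero, add_zero, ih]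

theorem card_filter_Icc_one_eq_count (hp0 : ¬ p 0) (n : ℕ) :
    #{k ∈ Icc 1 n | p k} = count p (n + 1) := by
  rw [count_eq_card_filter_range]
  congr 1
  ext k
  simp only [mem_filter, mem_Icc, mem_range]
  constructor
  · rintro ⟨⟨-, hk⟩, hpk⟩
    exact ⟨by omega, hpk⟩
  · rintro ⟨hk, hpk⟩
    exact ⟨⟨Nat.pos_of_ne_zero fun h => hp0 (h ▸ hpk), by omega⟩, hpk⟩

theorem tendsto_count_atTop_iff : Tendsto (count p) atTop atTop ↔ {n | p n}.Infinite := by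
  refine ⟨fun h hfin => ?_, fun hp => ?_⟩
  · obtain ⟨n, hn⟩ := (h.eventually_gt_atTop (#hfin.toFinset)).exists
    exact (count_le_card hfin n).not_gt hn
  · exact tendsto_atTop_atTop_of_monotone (count_monotone p)
      fun b => ⟨nth p b, (count_nth_of_infinite hp b).ge⟩

theorem tendsto_card_filter_nth_div_iff (hp : {n | p n}.Infinite) {L : ℝ} :
    Tendsto (fun m => (#{k ∈ range m | q (nth p k)} : ℝ) / m) atTop (𝓝 L) ↔
      Tendsto (fun n => (count (fun k => p k ∧ q k) n : ℝ) / count p n) atTop (𝓝 L) := by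
  constructor
  · intro h
    refine (h.comp (tendsto_count_atTop_iff.2 hp)).congr fun n => ?_
    simp [card_filter_range_count_nth]
  · intro h
    rw [← tendsto_add_atTop_iff_nat 1]
    refine (h.comp (tendsto_add_atTop_nat 1 |>.comp (nth_strictMono hp).tendsto_atTop)).congr
      fun m => ?_
    simp [count_nth_succ_of_infinite hp, ← card_filter_range_count_nth]

end Nat

theorem tendsto_div_iff_two_mul_sub_div {ι : Type*} {l : Filter ι} {a b : ι → ℝ}
    (hb : ∀ᶠ i in l, b i ≠ 0) :
    Tendsto (fun i => a i / b i) l (𝓝 (1 / 2)) ↔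
      Tendsto (fun i => (2 * a i - b i) / b i) l (𝓝 0) := by
  have heq : (fun i => (2 * a i - b i) / b i) =ᶠ[l] fun i => 2 * (a i / b i) - 1 := by
    filter_upwards [hb] with i hi
    field_simp
  rw [tendsto_congr' heq]
  constructor
  · intro h
    simpa using (h.const_mul 2).sub_const 1
  · intro h
    simpa using (h.add_const 1).div_const 2

theorem tendsto_div_atTop_of_abs_le {a b c : ℕ → ℝ} (hab : ∀ n, |a n| ≤ b n)
    (hbc : ∀ n, b n ≤ c n) (hc : Tendsto c atTop atTop) (hb : Monotone b)
    (h : Tendsto b atTop atTop → Tendsto (fun n => a n / b n) atTop (𝓝 0)) :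
    Tendsto (fun n => a n / c n) atTop (𝓝 0) := by
  by_cases hb_top : Tendsto b atTop atTop
  · refine squeeze_zero_norm' ?_ (by simpa using (h hb_top).norm)
    filter_upwards [hb_top.eventually_gt_atTop 0] with n hn
    simp only [norm_div, Real.norm_eq_abs, abs_of_pos hn, abs_of_pos (hn.trans_le (hbc n))]
    exact div_le_div_of_nonneg_left (abs_nonneg _) hn (hbc n)
  · obtain ⟨C, hC⟩ : ∃ C, ∀ n, b n < C := by
      simpa [hb.tendsto_atTop_atTop_iff] using hb_top
    refine squeeze_zero_norm' ?_ ((tendsto_const_nhds (x := C)).div_atTop hc)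
    filter_upwards [hc.eventually_gt_atTop 0] with n hn
    rw [norm_div, Real.norm_of_nonneg hn.le]
    exact div_le_div_of_nonneg_right ((hab n).trans (hC n).le) hn.le

section Strategies

def negStrategy (f : List Bool →. Bool) : List Bool →. Bool :=
  fun l => (f l).map not

def trueBets (g : List Bool →. Bool) : List Bool →. Bool :=
  fun l => (g l).bind fun b => bif b then Part.some true else Part.none

theorem Partrec.negStrategy {f : List Bool →. Bool} (hf : Partrec f) : Partrec (negStrategy f) :=
  hf.map (Primrec.not.comp Primrec.snd).to_comp.to₂

theorem Partrec.trueBets {g : List Bool →. Bool} (hg : Partrec g) : Partrec (trueBets g) :=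
  hg.bind (Partrec.cond Computable.snd (Computable.const true).partrec Partrec.none)

variable (x : ℕ → Bool)

theorem payoff_eq_sub (f : List Bool →. Bool) (k : ℕ) :
    payoff f x k = payoff (trueBets f) x k - payoff (trueBets (negStrategy f)) x k := by
  rcases Part.eq_none_or_eq_some (f (prefixOf x (k - 1))) with hf | ⟨b, hf⟩
  · simp [payoff, trueBets, negStrategy, hf]
  · cases b <;> cases hx : x (k - 1) <;> simp [payoff, trueBets, negStrategy, hf, hx]

theorem betCount_eq_add (f : List Bool →. Bool) (n : ℕ) :
    betCount f x n = betCount (trueBets f) x n + betCount (trueBets (negStrategy f)) x n := by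
  simp only [betCount, card_filter, ← sum_add_distrib]
  refine sum_congr rfl fun k _ => ?_
  rcases Part.eq_none_or_eq_some (f (prefixOf x (k - 1))) with hf | ⟨b, hf⟩
  · simp [trueBets, negStrategy, hf]
  · cases b <;> simp [trueBets, negStrategy, hf]

theorem trueBets_dom_iff (g : List Bool →. Bool) (l : List Bool) :
    (trueBets g l).Dom ↔ g l = Part.some true := by
  rcases Part.eq_none_or_eq_some (g l) with hg | ⟨b, hg⟩
  · simp [trueBets, hg]
  · cases b <;> simp [trueBets, hg]

theorem betCount_trueBets (g : List Bool →. Bool) (n : ℕ) :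
    betCount (trueBets g) x n = Nat.count (SelectedAt g x) (n + 1) := by
  rw [betCount, ← Nat.card_filter_Icc_one_eq_count (fun h => by simp [SelectedAt] at h)]
  refine congrArg card (filter_congr fun k hk => ?_)
  rw [trueBets_dom_iff, SelectedAt, and_iff_right (mem_Icc.1 hk).1]

theorem payoff_trueBets (g : List Bool →. Bool) {k : ℕ} (hk : 1 ≤ k) :
    payoff (trueBets g) x k =
      2 * (if SelectedAt g x k ∧ x (k - 1) = true then 1 else 0) -
        (if SelectedAt g x k then 1 else 0) := by
  rcases Part.eq_none_or_eq_some (g (prefixOf x (k - 1))) with hg | ⟨b, hg⟩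
  · simp [payoff, trueBets, SelectedAt, hg]
  · cases b <;> cases hx : x (k - 1) <;> simp [payoff, trueBets, SelectedAt, hg, hx, hk]

theorem payoffSum_trueBets (g : List Bool →. Bool) (n : ℕ) :
    payoffSum (trueBets g) x n =
      2 * (Nat.count (fun k => SelectedAt g x k ∧ x (k - 1) = true) (n + 1) : ℤ) -
        Nat.count (SelectedAt g x) (n + 1) := by
  have h0 : ¬ SelectedAt g x 0 := fun h => by simp [SelectedAt] at h
  rw [payoffSum, sum_congr rfl fun k hk => payoff_trueBets x g (mem_Icc.1 hk).1,
    sum_sub_distrib, ← mul_sum, sum_boole, sum_boole,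
    Nat.card_filter_Icc_one_eq_count h0, Nat.card_filter_Icc_one_eq_count (fun h => h0 h.1)]

theorem payoffSum_eq_sub (f : List Bool →. Bool) (n : ℕ) :
    payoffSum f x n = payoffSum (trueBets f) x n - payoffSum (trueBets (negStrategy f)) x n := by
  simp only [payoffSum, payoff_eq_sub x f, sum_sub_distrib]

theorem abs_payoffSum_le_betCount (f : List Bool →. Bool) (n : ℕ) :
    |payoffSum f x n| ≤ betCount f x n := by
  rw [payoffSum, betCount, card_filter, Nat.cast_sum]
  refine (abs_sum_le_sum_abs _ _).trans (sum_le_sum fun k _ => ?_)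
  unfold payoff
  split_ifs <;> simp

theorem betCount_mono (f : List Bool →. Bool) : Monotone (betCount f x) :=
  fun _ _ h => card_le_card (filter_subset_filter _ (Icc_subset_Icc_right h))

theorem betsInfinitelyOften_trueBets_iff (g : List Bool →. Bool) :
    BetsInfinitelyOften (trueBets g) x ↔ {n | SelectedAt g x n}.Infinite := by
  simp only [BetsInfinitelyOften, betCount_trueBets]
  exact (tendsto_add_atTop_iff_nat 1).trans Nat.tendsto_count_atTop_iff

theorem tendsto_selectedSeq_freq_iff {g : List Bool →. Bool}
    (hg : {n | SelectedAt g x n}.Infinite) :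
    Tendsto (fun m => (#{k ∈ range m | selectedSeq g x k = true} : ℝ) / m) atTop (𝓝 (1 / 2)) ↔
      Tendsto (fun n => (payoffSum (trueBets g) x n : ℝ) / betCount (trueBets g) x n)
        atTop (𝓝 0) := by
  have hcount : ∀ᶠ n in atTop, (Nat.count (SelectedAt g x) (n + 1) : ℝ) ≠ 0 :=
    ((tendsto_add_atTop_iff_nat 1).2 (Nat.tendsto_count_atTop_iff.2 hg)).eventually_gt_atTop 0
      |>.mono fun n hn => by positivity
  refine (Nat.tendsto_card_filter_nth_div_iff (q := fun i => x (i - 1) = true) hg).trans ?_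
  rw [← tendsto_add_atTop_iff_nat 1, tendsto_div_iff_two_mul_sub_div hcount]
  simp only [payoffSum_trueBets, betCount_trueBets]
  push_cast
  rfl

theorem selectedAt_const_true : SelectedAt (fun _ => Part.some true) x = (1 ≤ ·) := by
  ext n
  simp [SelectedAt]

theorem selectedSeq_const_true : selectedSeq (fun _ => Part.some true) x = x := by
  funext k
  have hcount : Nat.count (1 ≤ ·) (k + 1) = k := by simp [Nat.count_succ']
  have hnth := Nat.nth_count (p := (1 ≤ ·)) (n := k + 1) (by omega)
  rw [hcount] at hnth
  simp only [selectedSeq, selectedAt_const_true, hnth, Nat.add_sub_cancel]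

theorem tendsto_payoffSum_div_betCount_of_selection
    (hsel : ∀ g : List Bool →. Bool, Partrec g → {n | SelectedAt g x n}.Infinite →
      Tendsto (fun m => (#{k ∈ range m | selectedSeq g x k = true} : ℝ) / m) atTop (𝓝 (1 / 2)))
    {f : List Bool →. Bool} (hf : Partrec f) (hbet : BetsInfinitelyOften f x) :
    Tendsto (fun n => (payoffSum f x n : ℝ) / betCount f x n) atTop (𝓝 0) := by
  have hpart : ∀ g, Partrec g → (∀ n, betCount (trueBets g) x n ≤ betCount f x n) →
      Tendsto (fun n => (payoffSum (trueBets g) x n : ℝ) / betCount f x n) atTop (𝓝 0) := by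
    intro g hg hle
    refine tendsto_div_atTop_of_abs_le (b := fun n => (betCount (trueBets g) x n : ℝ))
      (fun n => by exact_mod_cast abs_payoffSum_le_betCount x _ n)
      (fun n => by exact_mod_cast hle n) (tendsto_natCast_atTop_atTop.comp hbet)
      (fun _ _ h => Nat.cast_le.2 (betCount_mono x _ h)) fun hb => ?_
    have hinf := (betsInfinitelyOften_trueBets_iff x g).1 (tendsto_natCast_atTop_iff.1 hb)
    exact (tendsto_selectedSeq_freq_iff x hinf).1 (hsel g hg hinf)
  have hsplit := betCount_eq_add x f
  have hdiff := (hpart f hf fun n => (hsplit n).symm ▸ le_self_add).sub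
    (hpart _ hf.negStrategy fun n => (hsplit n).symm ▸ le_add_self)
  rw [sub_zero] at hdiff
  refine hdiff.congr fun n => ?_
  rw [payoffSum_eq_sub x f, Int.cast_sub, sub_div]

end Strategies

/-- **Fundamental theorem about Von Mises–Church randomness (betting form):**
`x` is Von Mises–Church random if and only if for every partial recursive betting
strategy `f` betting infinitely often along `x`, Bob's long-run average gain per bet
vanishes: `P(n)/B(n) → 0` (hence Alice's average gain, its negative, also tends to `0`).
No effectively computable betting strategy wins against `x`, nor does `x` win against
any such strategy. -/
theorem vmc_random_iff_no_winning_strategy (x : ℕ → Bool) :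
    VMCRandom x ↔
      ∀ f : List Bool →. Bool, Partrec f → BetsInfinitelyOften f x →
        Tendsto (fun n : ℕ => (payoffSum f x n : ℝ) / (betCount f x n : ℝ))
          atTop (nhds 0) := by
  refine ⟨fun hx f hf hbet => tendsto_payoffSum_div_betCount_of_selection x hx.2 hf hbet,
    fun H => ?_⟩
  have hsel : ∀ g : List Bool →. Bool, Partrec g → {n | SelectedAt g x n}.Infinite →
      Tendsto (fun m => (#{k ∈ range m | selectedSeq g x k = true} : ℝ) / m) atTop
        (𝓝 (1 / 2)) := fun g hg hinf =>
    (tendsto_selectedSeq_freq_iff x hinf).2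
      (H _ hg.trueBets ((betsInfinitelyOften_trueBets_iff x g).2 hinf))
  refine ⟨?_, hsel⟩
  have hall : {n | SelectedAt (fun _ => Part.some true) x n}.Infinite := by
    rw [selectedAt_const_true]
    exact Set.Ici_infinite 1
  simpa [selectedSeq_const_true, trueCount] using
    hsel (fun _ => Part.some true) (Computable.const true).partrec hall
end

section
/- (Von Mises–Church randomness versus Nash equilibrium, key lemma.) If a sequence x : ℕ → Bool is not Von Mises–Church random, then there exists a partial recursive strategy f : List Bool →. Bool betting infinitely often along x such that limsup_{n→∞} P(n)/B(n) > 0; that is, Bob has an effectively computable betting strategy with strictly positive long-run average gain per bet against x. Consequently, only Von Mises–Church random sequences can occur as Alice's action in a Nash equilibrium of the associated betting game. -/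
open Filter

open scoped Classical

lemma filter_range_nth_succ_eq_image {p : ℕ → Prop} (hp : (setOf p).Infinite) (m : ℕ) :
    (Finset.range (Nat.nth p m + 1)).filter p = (Finset.range (m + 1)).image (Nat.nth p) := by
  ext k
  simp only [Finset.mem_filter, Finset.mem_range, Finset.mem_image, Nat.lt_succ_iff]
  constructor
  · rintro ⟨hkle, hk⟩
    refine ⟨Nat.count p k, ?_, Nat.nth_count hk⟩
    have h := Nat.count_monotone p hkle
    rwa [Nat.count_nth_of_infinite hp] at h
  · rintro ⟨j, hj, rfl⟩
    exact ⟨(Nat.nth_le_nth hp).2 hj, Nat.nth_mem_of_infinite hp j⟩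

lemma key_lemma (x : ℕ → Bool) (f : List Bool →. Bool) (hf : Partrec f)
    (hinf : {n : ℕ | SelectedAt f x n}.Infinite)
    (hnot : ¬ Tendsto
      (fun m : ℕ =>
        ((((Finset.range m).filter (fun k => selectedSeq f x k = true)).card : ℝ) / m))
      atTop (nhds (1 / 2))) :
    ∃ g : List Bool →. Bool, Partrec g ∧ BetsInfinitelyOften g x ∧
      0 < Filter.limsup
            (fun n : ℕ => (payoffSum g x n : ℝ) / (betCount g x n : ℝ)) Filter.atTop := by
  classical
  set u : ℕ → ℝ :=
    fun m => ((((Finset.range m).filter (fun k => selectedSeq f x k = true)).card : ℝ) / m)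
    with hu
  -- extract a deviation ε and a side b
  rw [Metric.tendsto_atTop] at hnot
  push_neg at hnot
  obtain ⟨ε, hε, hfr⟩ := hnot
  have hfr' : ∃ᶠ m in atTop, ε ≤ |u m - 1 / 2| := by
    rw [frequently_atTop]
    intro N
    obtain ⟨m, hm, h⟩ := hfr N
    exact ⟨m, hm, by rwa [Real.dist_eq] at h⟩
  have hsplit : (∃ᶠ m in atTop, 1 / 2 + ε ≤ u m) ∨ (∃ᶠ m in atTop, u m ≤ 1 / 2 - ε) := by
    rw [← frequently_or_distrib]
    refine hfr'.mono fun m hm => ?_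
    rcases le_abs.1 hm with h | h
    · left; linarith
    · right; linarith
  set Tb : Bool → ℕ → ℕ :=
    fun b m => ((Finset.range m).filter (fun j => selectedSeq f x j = b)).card with hTb
  have hTadd : ∀ m, Tb true m + Tb false m = m := by
    intro m
    have h1 : ((Finset.range m).filter (fun j => selectedSeq f x j = false))
        = ((Finset.range m).filter (fun j => ¬ (selectedSeq f x j = true))) := by
      apply Finset.filter_congr
      intro j _
      simp [Bool.not_eq_true]
    have h2 := Finset.card_filter_add_card_filter_not
      (s := Finset.range m) (p := fun j => selectedSeq f x j = true)
    simp only [hTb, h1]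
    rw [h2, Finset.card_range]
  obtain ⟨b, hb⟩ : ∃ b : Bool, ∃ᶠ m in atTop,
      1 ≤ m ∧ ((1 : ℝ) / 2 + ε) * m ≤ (Tb b m : ℝ) := by
    rcases hsplit with h | h
    · refine ⟨true, (h.and_eventually (eventually_ge_atTop 1)).mono ?_⟩
      rintro m ⟨hum, hm⟩
      have hm0 : (0 : ℝ) < m := by exact_mod_cast hm
      refine ⟨hm, ?_⟩
      have := (le_div_iff₀ hm0).1 hum
      linarith [this]
    · refine ⟨false, (h.and_eventually (eventually_ge_atTop 1)).mono ?_⟩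
      rintro m ⟨hum, hm⟩
      have hm0 : (0 : ℝ) < m := by exact_mod_cast hm
      refine ⟨hm, ?_⟩
      have h1 : (Tb true m : ℝ) ≤ (1 / 2 - ε) * m := by
        have := (div_le_iff₀ hm0).1 hum
        linarith [this]
      have h2 : (Tb true m : ℝ) + (Tb false m : ℝ) = m := by exact_mod_cast hTadd m
      linarith
  -- the betting strategy
  set g : List Bool →. Bool :=
    fun w => (f w).bind (fun r => bif r then Part.some b else Part.none) with hg
  have hgpr : Partrec g := by
    apply hf.bind
    have hc : Computable (fun p : List Bool × Bool => cond p.2 (some b) (none : Option Bool)) :=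
      Computable.cond Computable.snd (Computable.const _) (Computable.const _)
    refine hc.ofOption.of_eq fun p => ?_
    rcases p with ⟨w, r⟩
    cases r <;> simp [Part.ofOption]
  have hdom : ∀ w, (g w).Dom ↔ f w = Part.some true := by
    intro w
    constructor
    · intro h
      rw [Part.eq_some_iff]
      obtain ⟨a, ha⟩ := Part.dom_iff_mem.1 h
      obtain ⟨r, hr, har⟩ := Part.mem_bind_iff.1 ha
      cases r
      · simp at har
      · exact hr
    · intro h
      have : b ∈ g w :=
        Part.mem_bind_iff.2 ⟨true, by rw [h]; exact Part.mem_some true, by simp⟩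
      exact Part.dom_iff_mem.2 ⟨b, this⟩
  have hget : ∀ w (h : (g w).Dom), (g w).get h = b := by
    intro w h
    have hmem := Part.get_mem h
    obtain ⟨r, hr, har⟩ := Part.mem_bind_iff.1 hmem
    cases r
    · simp at har
    · simpa using har
  have payoff_eq : ∀ k, payoff g x k =
      if f (prefixOf x (k - 1)) = Part.some true then
        (if b = x (k - 1) then (1 : ℤ) else -1) else 0 := by
    intro k
    unfold payoff
    by_cases h : (g (prefixOf x (k - 1))).Dom
    · rw [dif_pos h, if_pos ((hdom _).1 h), hget]
    · rw [dif_neg h, if_neg fun hc => h ((hdom _).2 hc)]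
  set A : ℕ → Finset ℕ := fun n => (Finset.Icc 1 n).filter (SelectedAt f x) with hAdef
  have hA : ∀ n, A n = (Finset.range (n + 1)).filter (SelectedAt f x) := by
    intro n
    ext k
    simp only [hAdef, Finset.mem_filter, Finset.mem_Icc, Finset.mem_range, Nat.lt_succ_iff]
    constructor
    · rintro ⟨⟨h1, h2⟩, hS⟩; exact ⟨h2, hS⟩
    · rintro ⟨h2, hS⟩; exact ⟨⟨hS.1, h2⟩, hS⟩
  have hBA : ∀ n, betCount g x n = (A n).card := by
    intro n
    unfold betCount
    congr 1
    apply Finset.filter_congr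
    intro k hk
    rw [Finset.mem_Icc] at hk
    rw [hdom]
    exact ⟨fun h => ⟨hk.1, h⟩, fun h => h.2⟩
  have hP : ∀ n, payoffSum g x n =
      2 * ((A n).filter (fun k => b = x (k - 1))).card - (A n).card := by
    intro n
    unfold payoffSum
    calc ∑ k ∈ Finset.Icc 1 n, payoff g x k
        = ∑ k ∈ Finset.Icc 1 n,
            (if f (prefixOf x (k - 1)) = Part.some true then
              (if b = x (k - 1) then (1 : ℤ) else -1) else 0) :=
          Finset.sum_congr rfl fun k _ => payoff_eq k
      _ = ∑ k ∈ (Finset.Icc 1 n).filter (fun k => f (prefixOf x (k - 1)) = Part.some true),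
            (if b = x (k - 1) then (1 : ℤ) else -1) := (Finset.sum_filter _ _).symm
      _ = ∑ k ∈ A n, (if b = x (k - 1) then (1 : ℤ) else -1) := by
          congr 1
          apply Finset.filter_congr
          intro k hk
          rw [Finset.mem_Icc] at hk
          exact ⟨fun h => ⟨hk.1, h⟩, fun h => h.2⟩
      _ = ∑ k ∈ A n, ((if b = x (k - 1) then (2 : ℤ) else 0) - 1) :=
          Finset.sum_congr rfl fun k _ => by split_ifs <;> ring
      _ = (∑ k ∈ A n, if b = x (k - 1) then (2 : ℤ) else 0) - (A n).card := by
          rw [Finset.sum_sub_distrib, Finset.sum_const, nsmul_eq_mul, mul_one]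
      _ = (∑ k ∈ (A n).filter (fun k => b = x (k - 1)), (2 : ℤ)) - (A n).card := by
          congr 1
          exact (Finset.sum_filter _ _).symm
      _ = 2 * ((A n).filter (fun k => b = x (k - 1))).card - (A n).card := by
          rw [Finset.sum_const, nsmul_eq_mul]; ring
  have hinf' : (setOf (SelectedAt f x)).Infinite := hinf
  have hAm : ∀ m, A (Nat.nth (SelectedAt f x) m)
      = (Finset.range (m + 1)).image (Nat.nth (SelectedAt f x)) := by
    intro m
    rw [hA, filter_range_nth_succ_eq_image hinf']
  have hcard : ∀ m, (A (Nat.nth (SelectedAt f x) m)).card = m + 1 := by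
    intro m
    rw [hAm, Finset.card_image_of_injective _ (Nat.nth_injective hinf'), Finset.card_range]
  have hmatch : ∀ m, ((A (Nat.nth (SelectedAt f x) m)).filter (fun k => b = x (k - 1))).card
      = ((Finset.range (m + 1)).filter (fun j => b = selectedSeq f x j)).card := by
    intro m
    rw [hAm, Finset.filter_image, Finset.card_image_of_injective _ (Nat.nth_injective hinf')]
    rfl
  have hTb' : ∀ m, ((Finset.range m).filter (fun j => b = selectedSeq f x j)).card = Tb b m := by
    intro m
    congr 1
    apply Finset.filter_congr
    intro j _
    exact eq_comm
  have hbets : BetsInfinitelyOften g x := by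
    unfold BetsInfinitelyOften
    apply tendsto_atTop_atTop_of_monotone
    · intro n n' h
      show betCount g x n ≤ betCount g x n'
      rw [hBA, hBA]
      exact Finset.card_le_card
        (Finset.filter_subset_filter _ (Finset.Icc_subset_Icc_right h))
    · intro N
      exact ⟨Nat.nth (SelectedAt f x) N, by rw [hBA, hcard]; omega⟩
  refine ⟨g, hgpr, hbets, ?_⟩
  set r : ℕ → ℝ := fun n => (payoffSum g x n : ℝ) / (betCount g x n : ℝ) with hr
  have hr1 : ∀ n, r n ≤ 1 := by
    intro n
    by_cases h0 : (betCount g x n : ℝ) = 0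
    · simp [hr, h0]
    · have hpos : (0 : ℝ) < (betCount g x n : ℝ) := by
        rcases Nat.eq_zero_or_pos (betCount g x n) with h | h
        · exact absurd (by exact_mod_cast h) h0
        · exact_mod_cast h
      show (payoffSum g x n : ℝ) / (betCount g x n : ℝ) ≤ 1
      rw [div_le_one hpos]
      have hC : ((A n).filter (fun k => b = x (k - 1))).card ≤ (A n).card :=
        Finset.card_le_card (Finset.filter_subset _ _)
      have := hP n
      have hB := hBA n
      push_cast [this, hB]
      have : (((A n).filter (fun k => b = x (k - 1))).card : ℝ) ≤ ((A n).card : ℝ) := by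
        exact_mod_cast hC
      linarith
  have hbnd : IsBoundedUnder (· ≤ ·) atTop r := isBoundedUnder_of ⟨1, hr1⟩
  have hten : Tendsto (fun m => Nat.nth (SelectedAt f x) (m - 1)) atTop atTop :=
    ((Nat.nth_strictMono hinf').tendsto_atTop).comp (tendsto_sub_atTop_nat 1)
  have hfreq2 : ∃ᶠ n in atTop, 2 * ε ≤ r n := by
    apply hten.frequently
    refine hb.mono ?_
    rintro m ⟨hm1, hTle⟩
    set n := Nat.nth (SelectedAt f x) (m - 1) with hn
    have hm' : m - 1 + 1 = m := Nat.sub_add_cancel hm1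
    have hBn : betCount g x n = m := by rw [hBA, hcard, hm']
    have hPn : payoffSum g x n = 2 * (Tb b m : ℤ) - m := by
      rw [hP, hmatch, hm', hTb', hcard, hm']
    have hm0 : (0 : ℝ) < m := by exact_mod_cast hm1
    show 2 * ε ≤ (payoffSum g x n : ℝ) / (betCount g x n : ℝ)
    rw [hBn, hPn, le_div_iff₀ hm0]
    push_cast
    linarith
  have hlim := le_limsup_of_frequently_le hfreq2 hbnd
  calc (0 : ℝ) < 2 * ε := by linarith
    _ ≤ _ := hlim

/-- **Von Mises–Church randomness versus Nash equilibrium (key lemma):**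
if `x` is not Von Mises–Church random, then there is a partial recursive betting
strategy `f` betting infinitely often along `x` whose long-run average gain per bet
has strictly positive limsup: Bob has an effectively computable betting strategy with
strictly positive long-run average gain per bet against `x`.  (Consequently, only
Von Mises–Church random sequences can occur as Alice's action in a Nash equilibrium
of the associated betting game.) -/
theorem not_vmc_random_exists_winning_strategy (x : ℕ → Bool) (hx : ¬ VMCRandom x) :
    ∃ f : List Bool →. Bool, Partrec f ∧ BetsInfinitelyOften f x ∧
      0 < Filter.limsup
            (fun n : ℕ => (payoffSum f x n : ℝ) / (betCount f x n : ℝ)) Filter.atTop := by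
  classical
  by_cases h1 : Tendsto (fun n : ℕ => (trueCount x n : ℝ) / n) atTop (nhds (1 / 2))
  · have h2 : ¬ ∀ f : List Bool →. Bool, Partrec f → {n : ℕ | SelectedAt f x n}.Infinite →
        Tendsto
          (fun m : ℕ =>
            ((((Finset.range m).filter (fun k => selectedSeq f x k = true)).card : ℝ) / m))
          atTop (nhds (1 / 2)) := fun h => hx ⟨h1, h⟩
    push_neg at h2
    obtain ⟨f, hf, hinf, hnot⟩ := h2
    exact key_lemma x f hf hinf hnot
  · set f₀ : List Bool →. Bool := fun _ => Part.some true with hf₀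
    have hsel : ∀ n, SelectedAt f₀ x n ↔ 1 ≤ n := fun n => ⟨And.left, fun h => ⟨h, rfl⟩⟩
    have hset : {n : ℕ | SelectedAt f₀ x n} = Set.Ici 1 := Set.ext fun n => hsel n
    have hinf : {n : ℕ | SelectedAt f₀ x n}.Infinite := by
      rw [hset]; exact Set.Ici_infinite 1
    have hnth : ∀ k, Nat.nth (SelectedAt f₀ x) k = k + 1 := by
      intro k
      have hcount : ∀ j, Nat.count (SelectedAt f₀ x) (j + 1) = j := by
        intro j
        induction j with
        | zero => simp [Nat.count_succ, hsel]
        | succ j ih => rw [Nat.count_succ, ih, if_pos ((hsel _).2 (by omega))]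
      have h := Nat.nth_count ((hsel (k + 1)).2 (by omega))
      rwa [hcount] at h
    have hseq : ∀ k, selectedSeq f₀ x k = x k := by
      intro k
      unfold selectedSeq
      rw [hnth]
      simp
    refine key_lemma x f₀ (Partrec.const' _) hinf fun hcon => h1 ?_
    have heq : (fun m : ℕ =>
        ((((Finset.range m).filter (fun k => selectedSeq f₀ x k = true)).card : ℝ) / m))
        = fun n : ℕ => (trueCount x n : ℝ) / n := by
      funext m
      unfold trueCount
      have hfe : (Finset.range m).filter (fun k => selectedSeq f₀ x k = true)
          = (Finset.range m).filter (fun i => x i = true) :=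
        Finset.filter_congr fun k _ => by rw [hseq k]
      rw [hfe]
    rwa [heq] at hcon
end
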